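/- arXiv:1405.5938 — 3 statements merged into one kernel-verified Lean document; each statement's English description precedes it below -/
import Mathlib

section
/- For a juggling sequence j of period n (i.e., i ↦ (j(i)+i) mod n is a bijection of Z/nZ), the sum j_1 + j_2 + ... + j_n is divisible by n. -/
/-- For a juggling sequence `j` of period `n` (the map `i ↦ j i + i` is a
bijection of `Z/nZ`), the sum of the throw heights is divisible by `n`. -/
theorem juggling_sum_divisible (n : ℕ) [NeZero n] (j : ZMod n → ℕ)
    (hj : Function.Bijective fun i : ZMod n => (j i : ZMod n) + i) :
    n ∣ ∑ i : ZMod n, j i := by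
  have h := Equiv.sum_comp (Equiv.ofBijective _ hj) (id : ZMod n → ZMod n)
  simp only [Equiv.ofBijective_apply, id] at h
  rw [Finset.sum_add_distrib] at h
  have h0 : (∑ i : ZMod n, (j i : ZMod n)) = 0 := by
    have h' : (∑ i : ZMod n, (j i : ZMod n)) + ∑ i : ZMod n, (i : ZMod n)
        = 0 + ∑ i : ZMod n, (i : ZMod n) := by rw [zero_add]; exact h
    exact add_right_cancel h'
  have : ((∑ i : ZMod n, j i : ℕ) : ZMod n) = 0 := by
    push_cast
    exact h0
  exact (ZMod.natCast_eq_zero_iff _ _).mp this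
end

section
/- Fix n ≥ 1, k ≥ 0 and an alphabet {0,1,...,q}. The directed multigraph whose edges are the words w of length n over {0,...,q} of weight k (sum of letters equal to k), where the edge w goes from the vertex given by its prefix of length s to the vertex given by its suffix of length s, is balanced: every vertex has in-degree equal to out-degree. -/
/-- The transition digraph of weight-`k` words of length `n` over the alphabet
`{0,…,q}`, where the edge for a word `w` goes from its prefix of length `s` to
its suffix of length `s`, is balanced: for every vertex `v` (word of length
`s`), the number of weight-`k` words ending with `v` equals the number of
weight-`k` words beginning with `v`. -/
theorem weight_k_words_balanced (n k q s : ℕ) (hs1 : 1 ≤ s) (hsn : s ≤ n - 1)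
    (v : Fin s → Fin (q + 1)) :
    Nat.card {w : Fin n → Fin (q + 1) //
        (∑ i, (w i).val) = k ∧ ∀ i : Fin s, w ⟨n - s + i.val, by omega⟩ = v i} =
      Nat.card {w : Fin n → Fin (q + 1) //
        (∑ i, (w i).val) = k ∧ ∀ i : Fin s, w ⟨i.val, by omega⟩ = v i} := by
  have hn : 2 ≤ n := by omega
  haveI : NeZero n := ⟨by omega⟩
  set c : Fin n := ⟨n - s, by omega⟩ with hc
  refine Nat.card_congr
    (Equiv.subtypeEquiv (((Equiv.addRight c).arrowCongr (Equiv.refl _)).symm) ?_)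
  intro w
  have key : ∀ i : Fin n,
      (((Equiv.addRight c).arrowCongr (Equiv.refl (Fin (q + 1)))).symm w) i = w (i + c) := by
    intro i; rfl
  constructor
  · rintro ⟨hsum, hsuf⟩
    constructor
    · rw [← hsum]
      simp only [key]
      exact Fintype.sum_equiv (Equiv.addRight c) _ _ (fun i => rfl)
    · intro i
      rw [key]
      have : (⟨i.val, by omega⟩ : Fin n) + c = ⟨n - s + i.val, by omega⟩ := by
        apply Fin.ext
        simp [Fin.add_def, hc]
        rw [Nat.mod_eq_of_lt (by omega)]
        omega
      rw [this]
      exact hsuf i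
  · rintro ⟨hsum, hpre⟩
    constructor
    · rw [← hsum]
      symm
      simp only [key]
      exact Fintype.sum_equiv (Equiv.addRight c) _ _ (fun i => rfl)
    · intro i
      have h := hpre i
      rw [key] at h
      have : (⟨i.val, by omega⟩ : Fin n) + c = ⟨n - s + i.val, by omega⟩ := by
        apply Fin.ext
        simp [Fin.add_def, hc]
        rw [Nat.mod_eq_of_lt (by omega)]
        omega
      rwa [this] at h
end

section
/- Let NL(k) denote the number of naturally labeled posets on {1,...,k}, and for a poset λ let anti(λ) denote its number of antichains (including the empty set). Then NL(k) = Σ_{λ} anti(λ), where the sum runs over all naturally labeled posets λ on {1,...,k−1}. -/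
namespace NLaux

variable {n : ℕ}

/-- Extend a relation `r` on `Fin n` to `Fin (n+1)` by putting `Fin.last n`
above exactly the down-set generated by `A`. -/
def ext (r : Fin n → Fin n → Prop) (A : Set (Fin n)) : Fin (n+1) → Fin (n+1) → Prop :=
  fun x y =>
    (x = Fin.last n ∧ y = Fin.last n) ∨
    (∃ a b : Fin n, x = a.castSucc ∧ y = b.castSucc ∧ r a b) ∨
    (∃ a : Fin n, x = a.castSucc ∧ y = Fin.last n ∧ ∃ c ∈ A, r a c)

lemma castSucc_ne_last (a : Fin n) : a.castSucc ≠ Fin.last n :=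
  (Fin.castSucc_lt_last a).ne

lemma ext_cc {r : Fin n → Fin n → Prop} {A : Set (Fin n)} {a b : Fin n} :
    ext r A a.castSucc b.castSucc ↔ r a b := by
  constructor
  · rintro (⟨h, -⟩ | ⟨a', b', ha, hb, h⟩ | ⟨a', -, hb, -⟩)
    · exact absurd h (castSucc_ne_last a)
    · rwa [Fin.castSucc_inj.mp ha, Fin.castSucc_inj.mp hb]
    · exact absurd hb (castSucc_ne_last b)
  · exact fun h => Or.inr (Or.inl ⟨a, b, rfl, rfl, h⟩)

lemma ext_cl {r : Fin n → Fin n → Prop} {A : Set (Fin n)} {a : Fin n} :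
    ext r A a.castSucc (Fin.last n) ↔ ∃ c ∈ A, r a c := by
  constructor
  · rintro (⟨h, -⟩ | ⟨a', b', -, hb, -⟩ | ⟨a', ha, -, h⟩)
    · exact absurd h (castSucc_ne_last a)
    · exact absurd hb.symm (castSucc_ne_last b')
    · rwa [Fin.castSucc_inj.mp ha]
  · exact fun h => Or.inr (Or.inr ⟨a, rfl, rfl, h⟩)

lemma ext_lc {r : Fin n → Fin n → Prop} {A : Set (Fin n)} {b : Fin n} :
    ¬ ext r A (Fin.last n) b.castSucc := by
  rintro (⟨-, h⟩ | ⟨a', b', ha, -, -⟩ | ⟨a', -, hb, -⟩)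
  · exact castSucc_ne_last b h
  · exact castSucc_ne_last a' ha.symm
  · exact castSucc_ne_last b hb

lemma ext_ll {r : Fin n → Fin n → Prop} {A : Set (Fin n)} :
    ext r A (Fin.last n) (Fin.last n) := Or.inl ⟨rfl, rfl⟩

section
variable {r : Fin n → Fin n → Prop} {A : Set (Fin n)}

lemma ext_po (hr : IsPartialOrder (Fin n) r) :
    IsPartialOrder (Fin (n+1)) (ext r A) := by
  refine { refl := ?_, trans := ?_, antisymm := ?_ }
  · intro x
    rcases Fin.eq_castSucc_or_eq_last x with ⟨a, rfl⟩ | rfl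
    · exact ext_cc.mpr (hr.refl a)
    · exact ext_ll
  · intro x y z hxy hyz
    rcases Fin.eq_castSucc_or_eq_last x with ⟨a, rfl⟩ | rfl
    · rcases Fin.eq_castSucc_or_eq_last y with ⟨b, rfl⟩ | rfl
      · rcases Fin.eq_castSucc_or_eq_last z with ⟨c, rfl⟩ | rfl
        · exact ext_cc.mpr (hr.trans _ _ _ (ext_cc.mp hxy) (ext_cc.mp hyz))
        · obtain ⟨c, hc, hbc⟩ := ext_cl.mp hyz
          exact ext_cl.mpr ⟨c, hc, hr.trans _ _ _ (ext_cc.mp hxy) hbc⟩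
      · rcases Fin.eq_castSucc_or_eq_last z with ⟨c, rfl⟩ | rfl
        · exact absurd hyz ext_lc
        · exact hxy
    · rcases Fin.eq_castSucc_or_eq_last y with ⟨b, rfl⟩ | rfl
      · exact absurd hxy ext_lc
      · exact hyz
  · intro x y hxy hyx
    rcases Fin.eq_castSucc_or_eq_last x with ⟨a, rfl⟩ | rfl
    · rcases Fin.eq_castSucc_or_eq_last y with ⟨b, rfl⟩ | rfl
      · exact congrArg Fin.castSucc (hr.antisymm _ _ (ext_cc.mp hxy) (ext_cc.mp hyx))
      · exact absurd hyx ext_lc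
    · rcases Fin.eq_castSucc_or_eq_last y with ⟨b, rfl⟩ | rfl
      · exact absurd hxy ext_lc
      · rfl

lemma ext_nat (hnat : ∀ a b, r a b → a ≤ b) : ∀ x y, ext r A x y → x ≤ y := by
  intro x y hxy
  rcases Fin.eq_castSucc_or_eq_last x with ⟨a, rfl⟩ | rfl
  · rcases Fin.eq_castSucc_or_eq_last y with ⟨b, rfl⟩ | rfl
    · simpa using hnat a b (ext_cc.mp hxy)
    · exact (Fin.castSucc_lt_last a).le
  · rcases Fin.eq_castSucc_or_eq_last y with ⟨b, rfl⟩ | rfl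
    · exact absurd hxy ext_lc
    · exact le_refl _
end

/-- The forward map of the bijection. -/
def F (p : (lam : {r : Fin n → Fin n → Prop //
        IsPartialOrder (Fin n) r ∧ ∀ a b, r a b → a ≤ b}) ×
        {A : Set (Fin n) // IsAntichain lam.1 A}) :
    {r : Fin (n+1) → Fin (n+1) → Prop //
        IsPartialOrder (Fin (n+1)) r ∧ ∀ a b, r a b → a ≤ b} :=
  ⟨ext p.1.1 p.2.1, ext_po p.1.2.1, ext_nat p.1.2.2⟩

lemma F_inj : Function.Injective (F (n := n)) := by
  rintro ⟨⟨r, hr, hnat⟩, A, hA⟩ ⟨⟨r', hr', hnat'⟩, A', hA'⟩ h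
  have hext : ext r A = ext r' A' := congrArg Subtype.val h
  have hrr : r = r' := by
    funext a b
    exact propext (ext_cc.symm.trans
      ((iff_of_eq (congrFun (congrFun hext a.castSucc) b.castSucc)).trans ext_cc))
  subst hrr
  have hdown : ∀ a : Fin n, (∃ c ∈ A, r a c) ↔ (∃ c ∈ A', r a c) := fun a =>
    ext_cl.symm.trans
      ((iff_of_eq (congrFun (congrFun hext a.castSucc) (Fin.last n))).trans ext_cl)
  have key : ∀ (B B' : Set (Fin n)), IsAntichain r B → IsAntichain r B' →
      (∀ a, (∃ c ∈ B, r a c) ↔ (∃ c ∈ B', r a c)) → B ⊆ B' := by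
    intro B B' hB hB' hd a haB
    obtain ⟨b, hbB', hab⟩ := (hd a).mp ⟨a, haB, hr.refl a⟩
    obtain ⟨c, hcB, hbc⟩ := (hd b).mpr ⟨b, hbB', hr.refl b⟩
    have hac : r a c := hr.trans _ _ _ hab hbc
    have hacEq : a = c := by
      by_contra hne
      exact hB haB hcB hne hac
    subst hacEq
    have : a = b := hr.antisymm _ _ hab hbc
    exact this ▸ hbB'
  have hAA : A = A' :=
    le_antisymm (key A A' hA hA' hdown) (key A' A hA' hA fun a => (hdown a).symm)
  subst hAA
  rfl

lemma F_surj : Function.Surjective (F (n := n)) := by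
  rintro ⟨s, hs, hnat⟩
  set r : Fin n → Fin n → Prop := fun a b => s a.castSucc b.castSucc with hr_def
  have hr : IsPartialOrder (Fin n) r :=
    { refl := fun a => hs.refl _,
      trans := fun a b c h1 h2 => hs.trans _ _ _ h1 h2,
      antisymm := fun a b h1 h2 => Fin.castSucc_inj.mp (hs.antisymm _ _ h1 h2) }
  have hrnat : ∀ a b : Fin n, r a b → a ≤ b := by
    intro a b h
    simpa using hnat _ _ h
  set A : Set (Fin n) :=
    {a | s a.castSucc (Fin.last n) ∧
      ∀ b, s b.castSucc (Fin.last n) → r a b → a = b} with hA_def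
  have hA : IsAntichain r A := by
    intro a ha b hb hne hab
    exact hne (ha.2 b hb.1 hab)
  have hmax : ∀ m (a : Fin n), n - a.val ≤ m → s a.castSucc (Fin.last n) →
      ∃ c ∈ A, r a c := by
    intro m
    induction m with
    | zero =>
      intro a hle _
      have := a.isLt
      omega
    | succ m ih =>
      intro a hle hD
      by_cases hmem : ∀ b, s b.castSucc (Fin.last n) → r a b → a = b
      · exact ⟨a, ⟨hD, hmem⟩, hs.refl _⟩
      · push_neg at hmem
        obtain ⟨b, hbD, hab, hne⟩ := hmem
        have hle' : a ≤ b := hrnat _ _ hab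
        have hlt : a.val < b.val :=
          lt_of_le_of_ne hle' (fun h => hne (Fin.ext h))
        obtain ⟨c, hcA, hbc⟩ := ih b (by omega) hbD
        exact ⟨c, hcA, hs.trans _ _ _ hab hbc⟩
  refine ⟨⟨⟨r, hr, hrnat⟩, ⟨A, hA⟩⟩, ?_⟩
  apply Subtype.ext
  funext x y
  apply propext
  show ext r A x y ↔ s x y
  rcases Fin.eq_castSucc_or_eq_last x with ⟨a, rfl⟩ | rfl
  · rcases Fin.eq_castSucc_or_eq_last y with ⟨b, rfl⟩ | rfl
    · exact ext_cc
    · refine ext_cl.trans ⟨?_, ?_⟩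
      · rintro ⟨c, hc, hac⟩
        exact hs.trans _ _ _ hac hc.1
      · intro h
        exact hmax n a (by omega) h
  · rcases Fin.eq_castSucc_or_eq_last y with ⟨b, rfl⟩ | rfl
    · refine iff_of_false ext_lc ?_
      intro h
      exact absurd (hnat _ _ h) (not_le.mpr (Fin.castSucc_lt_last b))
    · exact iff_of_true ext_ll (hs.refl _)

end NLaux

/-- `NL(k) = Σ_λ anti(λ)`: the number of naturally labeled posets on
`{1,…,k}` equals the sum, over all naturally labeled posets `λ` on
`{1,…,k-1}`, of the number of antichains of `λ` (formulated as the cardinality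
of the sigma type of pairs (NL poset of size `k-1`, antichain of it)). -/
theorem nl_count_eq_sum_antichains (k : ℕ) (hk : 1 ≤ k) :
    Nat.card {r : Fin k → Fin k → Prop //
        IsPartialOrder (Fin k) r ∧ ∀ a b, r a b → a ≤ b} =
      Nat.card ((lam : {r : Fin (k - 1) → Fin (k - 1) → Prop //
        IsPartialOrder (Fin (k - 1)) r ∧ ∀ a b, r a b → a ≤ b}) ×
        {A : Set (Fin (k - 1)) // IsAntichain lam.1 A}) := by
  obtain ⟨n, rfl⟩ : ∃ n, k = n + 1 := ⟨k - 1, by omega⟩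
  exact (Nat.card_eq_of_bijective NLaux.F ⟨NLaux.F_inj, NLaux.F_surj⟩).symm
end
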